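/- arXiv:2008.13429 — 2 statements merged into one kernel-verified Lean document; each statement's English description precedes it below -/
import Mathlib

section
/- Sort d ∈ ℝ^n in ascending order d_1 ≤ d_2 ≤ ... ≤ d_n and suppose (k/2) d_k - (1/2) Σ_{j=1}^k d_j < α ≤ (k/2) d_{k+1} - (1/2) Σ_{j=1}^k d_j for some 1 ≤ k < n. Then the minimizer z of Σ_j (d_j z_j + α z_j²) over the probability simplex, given by z_j = max((β - d_j)/(2α), 0) with β = (2α + Σ_{j=1}^k d_j)/k, has exactly k nonzero components (z_k > 0 and z_{k+1} = 0). -/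
/-!
With `k β = 2 α + S`, the two bounds on `α` say exactly that the level `β` lies in
`(d_k, d_{k+1}]`. Since `α > 0`, `z_j > 0` iff `d_j < β`, and as `d` is sorted this happens iff `j ≤ k`.
-/

theorem pos_max_sub_div_iff {α β x : ℝ} (hα : 0 < α) :
    0 < max ((β - x) / (2 * α)) 0 ↔ x < β := by
  rw [lt_max_iff, lt_self_iff_false, or_false, div_pos_iff_of_pos_right (by positivity), sub_pos]

theorem Monotone.lt_iff_lt_of_lt_of_le {ι γ : Type*} [LinearOrder ι] [Preorder γ]
    {d : ι → γ} (hd : Monotone d) {a b : ι} (hab : ∀ j, j < b → j ≤ a) {β : γ}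
    (ha : d a < β) (hb : β ≤ d b) (j : ι) : d j < β ↔ j < b :=
  ⟨fun hj => lt_of_not_ge fun hbj => not_lt_of_ge (hb.trans (hd hbj)) hj,
    fun hj => (hd (hab j hj)).trans_lt ha⟩

/-- Let `d ∈ ℝ^n` be sorted ascending and suppose
`(k/2) d_k - (1/2) Σ_{j=1}^k d_j < α ≤ (k/2) d_{k+1} - (1/2) Σ_{j=1}^k d_j` for some
`1 ≤ k < n`. Then the minimizer `z_j = max((β - d_j)/(2α), 0)` with
`β = (2α + Σ_{j=1}^k d_j)/k` has exactly `k` nonzero components: `z_k > 0`, `z_{k+1} = 0`,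
and `z_j > 0` exactly for the first `k` indices. -/
theorem sparsity_of_simplex_solution (n k : ℕ) (hkn : k < n)
    (d : Fin n → ℝ) (hd : Monotone d) (α : ℝ) (hα : 0 < α)
    (S : ℝ)
    (hlow : (k / 2 : ℝ) * d ⟨k - 1, by omega⟩ - S / 2 < α)
    (hhigh : α ≤ (k / 2 : ℝ) * d ⟨k, hkn⟩ - S / 2)
    (β : ℝ) (hβ : β = (2 * α + S) / k)
    (z : Fin n → ℝ) (hz : z = fun j => max ((β - d j) / (2 * α)) 0) :
    0 < z ⟨k - 1, by omega⟩ ∧ z ⟨k, hkn⟩ = 0 ∧ ∀ j : Fin n, (0 < z j ↔ (j : ℕ) < k) := by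
  have hk : 0 < k := Nat.pos_of_ne_zero fun hk0 => by
    subst hk0
    simp only [CharP.cast_eq_zero, zero_div, zero_mul, zero_sub] at hlow hhigh
    linarith
  have hk' : (0 : ℝ) < k := by exact_mod_cast hk
  have hlevel_low : d ⟨k - 1, by omega⟩ < β := by rw [hβ, lt_div_iff₀ hk']; linarith
  have hlevel_high : β ≤ d ⟨k, hkn⟩ := by rw [hβ, div_le_iff₀ hk']; linarith
  have hsupport (j : Fin n) : 0 < z j ↔ (j : ℕ) < k := by
    rw [hz, pos_max_sub_div_iff hα,
      hd.lt_iff_lt_of_lt_of_le (fun i (hi : (i : ℕ) < k) => show (i : ℕ) ≤ k - 1 by omega)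
        hlevel_low hlevel_high j, Fin.lt_def]
  have hz_nonneg (j : Fin n) : 0 ≤ z j := by rw [hz]; exact le_max_right _ _
  exact ⟨(hsupport _).2 (Nat.sub_lt hk one_pos),
    (hz_nonneg _).antisymm' (not_lt.1 (mt (hsupport _).1 (lt_irrefl k))), hsupport⟩
end

section
/- Let X ∈ ℝ^{n×m} with rows x_i^T, H = I - (1/n)11^T the centering matrix, and Z the block-constant clustering matrix (z_ij = 1/n_k if i,j in cluster k, else 0). Then Tr(X^T H (I - Z) H X) equals the within-cluster sum of squares (k-means objective) Σ_k Σ_{i ∈ C_k} ‖x_i - m_k‖², where m_k is the mean of cluster k, provided each cluster mean is computed in the original (uncentered) coordinates. -/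
/-!
The rows of `Z` sum to one and `Z` is symmetric, so `1 - Z` annihilates the all-ones matrix
from both sides and the centering drops out: `H (1 - Z) H = 1 - Z`. Multiplying by `Z` replaces
each row by the mean of its cluster, so `Z` and hence `1 - Z` are symmetric idempotents, and
`Tr(Xᵀ (1 - Z) X)` is the sum of squared entries of `(1 - Z) X`, whose rows are the residuals
`x_i - m_{π i}`.
-/

open Matrix Finset

namespace Matrix

section CommRing

variable {ι R : Type*} [Fintype ι] [CommRing R]

theorem centering_mul_mul_centering [DecidableEq ι] {P : Matrix ι ι R} (c : R)
    (hPJ : P * of (fun _ _ => (1 : R)) = 0) (hJP : of (fun _ _ => (1 : R)) * P = 0) :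
    (1 - c • of fun _ _ => (1 : R)) * P * (1 - c • of fun _ _ => (1 : R)) = P := by
  simp only [Matrix.sub_mul, Matrix.mul_sub, Matrix.one_mul, Matrix.mul_one, Matrix.smul_mul,
    Matrix.mul_smul, hPJ, hJP, smul_zero, sub_zero]

theorem IsSymm.trace_transpose_mul_mul_eq_sum_sq {κ : Type*} [Fintype κ]
    {P : Matrix ι ι R} (hsymm : P.IsSymm) (hidem : IsIdempotentElem P) (X : Matrix ι κ R) :
    (Xᵀ * P * X).trace = ∑ i, ∑ a, (P * X) i a ^ 2 := by
  have hfactor : Xᵀ * P * X = (P * X)ᵀ * (P * X) := by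
    conv_lhs => rw [← hidem.eq, ← hsymm.eq]
    simp only [transpose_mul, hsymm.eq, Matrix.mul_assoc]
  rw [hfactor, trace, Finset.sum_comm]
  simp only [diag_apply, mul_apply, transpose_apply, sq]

end CommRing

section ClusterAverage

variable {ι κ : Type*} [Fintype ι] [DecidableEq κ] (K : Type*) [Field K]

noncomputable def clusterAverage (π : ι → κ) : Matrix ι ι K :=
  of fun i j => if π i = π j then (#{l | π l = π i} : K)⁻¹ else 0

variable (π : ι → κ)

theorem clusterAverage_isSymm : (clusterAverage K π).IsSymm := by
  ext i j
  by_cases h : π i = π j <;> simp [clusterAverage, h, eq_comm]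

theorem clusterAverage_mul_apply {α : Type*} (X : Matrix ι α K) (i : ι) (a : α) :
    (clusterAverage K π * X) i a =
      (#{l | π l = π i} : K)⁻¹ * ∑ l ∈ {l | π l = π i}, X l a := by
  simp only [clusterAverage, mul_apply, of_apply, ite_mul, zero_mul, ← Finset.sum_filter,
    Finset.mul_sum, eq_comm (a := π i)]

theorem clusterAverage_mul_eq_self [CharZero K] {α : Type*} {X : Matrix ι α K}
    (hX : ∀ i l a, π l = π i → X l a = X i a) : clusterAverage K π * X = X := by
  ext i a
  have hcard : (#{l | π l = π i} : K) ≠ 0 :=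
    Nat.cast_ne_zero.2 (Finset.card_ne_zero.2 ⟨i, by simp⟩)
  rw [clusterAverage_mul_apply,
    Finset.sum_congr rfl fun l hl => hX i l a (Finset.mem_filter.1 hl).2, Finset.sum_const,
    nsmul_eq_mul, inv_mul_cancel_left₀ hcard]

theorem isIdempotentElem_clusterAverage [CharZero K] :
    IsIdempotentElem (clusterAverage K π) :=
  clusterAverage_mul_eq_self K π fun i l j h => by simp only [clusterAverage, of_apply, h]

theorem one_sub_clusterAverage_mul_ones [DecidableEq ι] [CharZero K] :
    (1 - clusterAverage K π) * of (fun _ _ => (1 : K)) = 0 := by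
  rw [Matrix.sub_mul, Matrix.one_mul, clusterAverage_mul_eq_self K π fun _ _ _ _ => rfl,
    sub_self]

theorem ones_mul_one_sub_clusterAverage [DecidableEq ι] [CharZero K] :
    of (fun _ _ => (1 : K)) * (1 - clusterAverage K π) = 0 := by
  have h := congrArg transpose (one_sub_clusterAverage_mul_ones K π)
  rwa [transpose_mul, transpose_sub, transpose_one, (clusterAverage_isSymm K π).eq,
    transpose_zero] at h

end ClusterAverage

end Matrix

theorem trace_centered_equals_kmeans_general (n m c : ℕ)
    (π : Fin n → Fin c)
    (nk : Fin c → ℕ) (hnk : ∀ k, nk k = (Finset.univ.filter fun i => π i = k).card)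
    (Z : Matrix (Fin n) (Fin n) ℝ)
    (hZ : Z = Matrix.of fun i j => if π i = π j then (1 : ℝ) / (nk (π i)) else 0)
    (H : Matrix (Fin n) (Fin n) ℝ)
    (hH : H = 1 - (1 / (n : ℝ)) • (Matrix.of fun _ _ => (1 : ℝ)))
    (X : Matrix (Fin n) (Fin m) ℝ)
    (μ : Fin c → Fin m → ℝ)
    (hμ : ∀ k, μ k = fun a => (1 / (nk k : ℝ)) * ∑ i ∈ Finset.univ.filter
        (fun i => π i = k), X i a) :
    (Xᵀ * H * (1 - Z) * H * X).trace
      = ∑ k, ∑ i ∈ Finset.univ.filter (fun i => π i = k), ∑ a, (X i a - μ k a)^2 := by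
  obtain rfl : Z = clusterAverage ℝ π := by simp only [hZ, hnk, one_div, clusterAverage]
  have hresidual : ∀ i a,
      ((1 - clusterAverage ℝ π) * X : Matrix (Fin n) (Fin m) ℝ) i a = X i a - μ (π i) a := by
    intro i a
    rw [Matrix.sub_mul, Matrix.one_mul, Matrix.sub_apply, clusterAverage_mul_apply, hμ, hnk,
      one_div]
  calc _ = (Xᵀ * (H * (1 - clusterAverage ℝ π) * H) * X).trace := by
        simp only [Matrix.mul_assoc]
    _ = (Xᵀ * (1 - clusterAverage ℝ π) * X).trace := by
        rw [hH, centering_mul_mul_centering _ (one_sub_clusterAverage_mul_ones ℝ π)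
          (ones_mul_one_sub_clusterAverage ℝ π)]
    _ = ∑ i, ∑ a, (X i a - μ (π i) a) ^ 2 := by
        rw [(isSymm_one.sub (clusterAverage_isSymm ℝ π)).trace_transpose_mul_mul_eq_sum_sq
          (isIdempotentElem_clusterAverage ℝ π).one_sub]
        simp only [hresidual]
    _ = _ := by
        rw [← Finset.sum_fiberwise Finset.univ π]
        refine Finset.sum_congr rfl fun k _ => Finset.sum_congr rfl fun i hi => ?_
        rw [(Finset.mem_filter.1 hi).2]

/-- For `X ∈ ℝ^{n×m}` with rows `x_i`, `H = I - (1/n)11ᵀ` the centering matrix, and `Z`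
the block-constant clustering matrix of a clustering `π` (`z_ij = 1/n_k` if `i, j` are both
in cluster `k`, else `0`), `Tr(Xᵀ H (I - Z) H X)` equals the within-cluster sum of squares
`Σ_k Σ_{i ∈ C_k} ‖x_i - m_k‖²`, with `m_k` the mean of cluster `k` in the original
coordinates. -/
theorem trace_centered_equals_kmeans (n m c : ℕ) (hn : 0 < n)
    (π : Fin n → Fin c) (hπ : Function.Surjective π)
    (nk : Fin c → ℕ) (hnk : ∀ k, nk k = (Finset.univ.filter fun i => π i = k).card)
    (Z : Matrix (Fin n) (Fin n) ℝ)
    (hZ : Z = Matrix.of fun i j => if π i = π j then (1 : ℝ) / (nk (π i)) else 0)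
    (H : Matrix (Fin n) (Fin n) ℝ)
    (hH : H = 1 - (1 / (n : ℝ)) • (Matrix.of fun _ _ => (1 : ℝ)))
    (X : Matrix (Fin n) (Fin m) ℝ)
    (μ : Fin c → Fin m → ℝ)
    (hμ : ∀ k, μ k = fun a => (1 / (nk k : ℝ)) * ∑ i ∈ Finset.univ.filter
        (fun i => π i = k), X i a) :
    (Xᵀ * H * (1 - Z) * H * X).trace
      = ∑ k, ∑ i ∈ Finset.univ.filter (fun i => π i = k), ∑ a, (X i a - μ k a)^2 :=
  trace_centered_equals_kmeans_general n m c π nk hnk Z hZ H hH X μ hμ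
end
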